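/- arXiv:1812.04966 — 3 statements merged into one kernel-verified Lean document; each statement's English description precedes it below -/
import Mathlib

section
/- Fix ε ∈ (0, 1/5], a finite point set P ⊂ R^d, and α > 0 with α and (1+ε)α both of the form (1+ε)^k. With S_α defined as the union of pixels (from the lattice at scale α) whose center is within distance α of P, one has B_{(1+ε/2)α} ⊆ S_{(1+ε)α}, i.e., every point within distance (1+ε/2)α of P lies in some pixel of the grid used at scale (1+ε)α whose center is within distance (1+ε)α of P. -/
/-- The closed lattice cube (pixel) of the lattice `c·ℤ^d` with base point `m`. -/
def pixel (d : ℕ) (c : ℝ) (m : Fin d → ℤ) : Set (EuclideanSpace ℝ (Fin d)) :=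
  {x | ∀ i, c * m i ≤ x i ∧ x i ≤ c * (m i + 1)}

/-- The center of the pixel of `c·ℤ^d` with base point `m`. -/
noncomputable def pixelCenter (d : ℕ) (c : ℝ) (m : Fin d → ℤ) :
    EuclideanSpace ℝ (Fin d) :=
  WithLp.toLp 2 (fun i => c * (m i + 1 / 2))

/-!
Take the pixel containing `x` obtained by rounding its coordinates down. Its center lies within
half the pixel diameter, `√d · c / 2 = εβ/8`, of `x`. Since `β ≤ (1+ε)α` and `ε ≤ 1/5`, this is
at most `εα/2`, so the triangle inequality through `x` puts the center within
`(1+ε/2)α + εα/2 = (1+ε)α` of the point of `P` near `x`.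
-/

section Pixel

variable {d : ℕ} {c : ℝ}

theorem mem_pixel_floor (hc : 0 < c) (x : EuclideanSpace ℝ (Fin d)) :
    x ∈ pixel d c (fun i => ⌊x i / c⌋) := fun _ =>
  ⟨(le_div_iff₀' hc).1 (Int.floor_le _), (div_le_iff₀' hc).1 (Int.lt_floor_add_one _).le⟩

theorem abs_pixelCenter_sub_le {m : Fin d → ℤ} {x : EuclideanSpace ℝ (Fin d)}
    (hx : x ∈ pixel d c m) (i : Fin d) : |pixelCenter d c m i - x i| ≤ c / 2 := by
  obtain ⟨hlo, hhi⟩ := hx i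
  simp only [pixelCenter, PiLp.toLp_apply]
  rw [abs_le]
  constructor <;> linarith

theorem dist_pixelCenter_le (hc : 0 ≤ c) {m : Fin d → ℤ} {x : EuclideanSpace ℝ (Fin d)}
    (hx : x ∈ pixel d c m) : dist (pixelCenter d c m) x ≤ √d * (c / 2) := by
  have hsq : ∀ i ∈ Finset.univ, dist (pixelCenter d c m i) (x i) ^ 2 ≤ (c / 2) ^ 2 :=
    fun i _ => pow_le_pow_left₀ dist_nonneg (abs_pixelCenter_sub_le hx i) 2
  calc dist (pixelCenter d c m) x
      = √(∑ i, dist (pixelCenter d c m i) (x i) ^ 2) := EuclideanSpace.dist_eq _ _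
    _ ≤ √(∑ _i : Fin d, (c / 2) ^ 2) := Real.sqrt_le_sqrt (Finset.sum_le_sum hsq)
    _ = √d * (c / 2) := by
      rw [Finset.sum_const, Finset.card_univ, Fintype.card_fin, nsmul_eq_mul,
        Real.sqrt_mul (Nat.cast_nonneg d), Real.sqrt_sq (by positivity)]

end Pixel

theorem balls_subset_pixelization_general {d : ℕ} (hd : 0 < d) {ε α β : ℝ}
    (hε0 : 0 < ε) (hε : ε ≤ 1 / 5)
    (k : ℤ) (hβ : β = 2 ^ k) (hβle : β ≤ (1 + ε) * α)
    (P : Finset (EuclideanSpace ℝ (Fin d)))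
    (x : EuclideanSpace ℝ (Fin d))
    (hx : ∃ p ∈ P, dist x p ≤ (1 + ε / 2) * α) :
    ∃ m : Fin d → ℤ, x ∈ pixel d (ε * β / (4 * Real.sqrt d)) m ∧
      ∃ p ∈ P,
        dist (pixelCenter d (ε * β / (4 * Real.sqrt d)) m) p ≤ (1 + ε) * α := by
  obtain ⟨p, hp, hxp⟩ := hx
  have hsd : 0 < √(d : ℝ) := Real.sqrt_pos.2 (Nat.cast_pos.2 hd)
  have hβ0 : 0 < β := hβ ▸ zpow_pos two_pos k
  have hα : 0 < α := by nlinarith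
  set c := ε * β / (4 * √d) with hc_def
  have hc : 0 < c := by positivity
  have half_diam : √d * (c / 2) = ε * β / 8 := by rw [hc_def]; field_simp; ring
  refine ⟨_, mem_pixel_floor hc x, p, hp, ?_⟩
  calc dist (pixelCenter d c _) p ≤ dist (pixelCenter d c _) x + dist x p := dist_triangle _ _ _
    _ ≤ ε * β / 8 + (1 + ε / 2) * α := by
      rw [← half_diam]
      gcongr
      exact dist_pixelCenter_le hc.le (mem_pixel_floor hc x)
    _ ≤ ε * ((1 + ε) * α) / 8 + (1 + ε / 2) * α := by gcongr
    _ ≤ (1 + ε) * α := by nlinarith [mul_le_mul_of_nonneg_left hε (mul_pos hε0 hα).le]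

/-- Every point within distance (1+ε/2)α of P lies in some pixel of the grid at
scale (1+ε)α (built on the lattice `(εβ/(4√d))·ℤ^d` where β is the largest power
of 2 with β ≤ (1+ε)α) whose center is within distance (1+ε)α of P. -/
theorem balls_subset_pixelization {d : ℕ} (hd : 0 < d) {ε α β : ℝ}
    (hε0 : 0 < ε) (hε : ε ≤ 1 / 5) (hα : 0 < α)
    (kk : ℤ) (hform : α = (1 + ε) ^ kk)
    (k : ℤ) (hβ : β = 2 ^ k) (hβle : β ≤ (1 + ε) * α) (hlt : (1 + ε) * α < 2 * β)
    (P : Finset (EuclideanSpace ℝ (Fin d)))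
    (x : EuclideanSpace ℝ (Fin d))
    (hx : ∃ p ∈ P, dist x p ≤ (1 + ε / 2) * α) :
    ∃ m : Fin d → ℤ, x ∈ pixel d (ε * β / (4 * Real.sqrt d)) m ∧
      ∃ p ∈ P,
        dist (pixelCenter d (ε * β / (4 * Real.sqrt d)) m) p ≤ (1 + ε) * α :=
  balls_subset_pixelization_general hd hε0 hε k hβ hβle P x hx
end

section
/- Let P ⊂ R^d be a finite set, W a δ-WSPD of P with δ ≤ 1/10, and define for each p ∈ P the set R̃_p ⊆ [0, ∞) as the union of the intervals [d(A,B)/4, 4·d(A,B)] over all pairs (A,B) ∈ W with p ∈ A or p ∈ B, where d(A,B) is the distance between the chosen representatives. Let r̃_p(α) = max{ r ≤ α : r ∈ R̃_p } (with r̃_p(α) = 0 if no such r exists). Then for every α ≥ 0, the nerve of the collection {\bar{B}(p, r̃_p(α)) : p ∈ P} equals the Čech complex C_α, i.e., the nerve of {\bar{B}(p, α) : p ∈ P}. -/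
/-!
Since `r̃_p(α) ≤ α`, one inclusion is immediate. Conversely, let `x` lie within `α` of every
`p ∈ σ`. If `x` is not already a common point of the lazy balls, pick `p₀ ∈ σ` with
`r̃_{p₀}(α) < ‖x - p₀‖ ≤ α`; we claim `p₀` itself is one. For `p ∈ σ \ {p₀}` take the pair
separating `p₀` and `p`, with representative distance `D`; by well-separatedness
`0.8 D ≤ ‖p₀ - p‖ ≤ 1.2 D`, and `‖p₀ - p‖ ≤ 2α` gives `D/4 ≤ α`. If `α ≤ 4D` then `α` is an
admissible radius for `p₀`, contradicting `r̃_{p₀}(α) < α`; so `4D < α`, `4D` is an admissible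
radius for `p`, and `‖p₀ - p‖ ≤ 1.2 D ≤ 4D ≤ r̃_p(α)`.
-/

open Set

section TruncatedSup

variable {α r : ℝ} (Q : ℝ → Prop)

theorem mem_upperBounds_zero_union_setOf_le_and (hα : 0 ≤ α) :
    α ∈ upperBounds ({0} ∪ {r : ℝ | r ≤ α ∧ Q r}) := by
  rintro r (rfl | ⟨hr, -⟩)
  exacts [hα, hr]

theorem sSup_zero_union_setOf_le_and_nonneg (hα : 0 ≤ α) :
    0 ≤ sSup ({0} ∪ {r : ℝ | r ≤ α ∧ Q r}) :=
  le_csSup ⟨α, mem_upperBounds_zero_union_setOf_le_and Q hα⟩ (Or.inl rfl)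

theorem sSup_zero_union_setOf_le_and_le (hα : 0 ≤ α) :
    sSup ({0} ∪ {r : ℝ | r ≤ α ∧ Q r}) ≤ α :=
  csSup_le ⟨0, Or.inl rfl⟩ (mem_upperBounds_zero_union_setOf_le_and Q hα)

variable {Q} in
theorem le_sSup_zero_union_setOf_le_and (hα : 0 ≤ α) (hr : r ≤ α) (hQ : Q r) :
    r ≤ sSup ({0} ∪ {r : ℝ | r ≤ α ∧ Q r}) :=
  le_csSup ⟨α, mem_upperBounds_zero_union_setOf_le_and Q hα⟩ (Or.inr ⟨hr, hQ⟩)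

end TruncatedSup

section LazyRadii

variable {X : Type*} [PseudoMetricSpace X]

theorem abs_dist_sub_dist_le_of_mem_pair {A B : Set X} {a₀ b₀ p q : X} {δ : ℝ}
    (hA : ∀ a ∈ A, dist a a₀ ≤ δ * dist a₀ b₀) (hB : ∀ b ∈ B, dist b b₀ ≤ δ * dist a₀ b₀)
    (hpq : (p ∈ A ∧ q ∈ B) ∨ (p ∈ B ∧ q ∈ A)) :
    |dist p q - dist a₀ b₀| ≤ 2 * δ * dist a₀ b₀ := by
  rcases hpq with ⟨hp, hq⟩ | ⟨hp, hq⟩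
  · have := dist_dist_dist_le p q a₀ b₀
    rw [Real.dist_eq] at this
    linarith [hA p hp, hB q hq]
  · have := dist_dist_dist_le q p a₀ b₀
    rw [Real.dist_eq, dist_comm q p] at this
    linarith [hA q hq, hB p hp]

theorem le_or_dist_le_of_abs_dist_sub_le {p q : X} {δ α D ρp ρq : ℝ} (hδ : δ ≤ 1 / 10)
    (hD₀ : 0 ≤ D) (hD : |dist p q - D| ≤ 2 * δ * D) (hpq : dist p q ≤ 2 * α)
    (hρp : ∀ r ∈ Icc (D / 4) (4 * D), r ≤ α → r ≤ ρp)
    (hρq : ∀ r ∈ Icc (D / 4) (4 * D), r ≤ α → r ≤ ρq) :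
    α ≤ ρp ∨ dist p q ≤ ρq := by
  have hδD : δ * D ≤ D / 10 := by nlinarith
  have hlo := (abs_le.mp hD).1
  have hhi := (abs_le.mp hD).2
  rcases le_or_gt α (4 * D) with h | h
  · exact Or.inl (hρp α ⟨by linarith, h⟩ le_rfl)
  · exact Or.inr (by linarith [hρq (4 * D) ⟨by linarith, le_rfl⟩ h.le])

theorem exists_forall_dist_le_of_forall_dist_le {σ : Set X} {ρ : X → ℝ} {α : ℝ}
    (hρ₀ : ∀ p ∈ σ, 0 ≤ ρ p)
    (hρ : ∀ p ∈ σ, ∀ q ∈ σ, p ≠ q → dist p q ≤ 2 * α → α ≤ ρ p ∨ dist p q ≤ ρ q)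
    {x : X} (hx : ∀ p ∈ σ, dist x p ≤ α) :
    ∃ y, ∀ p ∈ σ, dist y p ≤ ρ p := by
  by_cases hxρ : ∀ p ∈ σ, dist x p ≤ ρ p
  · exact ⟨x, hxρ⟩
  push Not at hxρ
  obtain ⟨p₀, hp₀, hlt⟩ := hxρ
  refine ⟨p₀, fun p hp => ?_⟩
  rcases eq_or_ne p₀ p with rfl | hne
  · simpa using hρ₀ p₀ hp₀
  have hdist : dist p₀ p ≤ 2 * α := by
    linarith [dist_triangle_left p₀ p x, hx p₀ hp₀, hx p hp]
  exact (hρ p₀ hp₀ p hp hne hdist).resolve_left fun h => by linarith [hx p₀ hp₀]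

end LazyRadii

theorem lazy_nerve_eq_cech_general {d : ℕ} {δ : ℝ} (hδ : δ ≤ 1 / 10)
    (P : Finset (EuclideanSpace ℝ (Fin d))) {ι : Type*}
    (A B : ι → Finset (EuclideanSpace ℝ (Fin d)))
    (repA repB : ι → EuclideanSpace ℝ (Fin d))
    (hrA : ∀ w, repA w ∈ A w) (hrB : ∀ w, repB w ∈ B w)
    (hsepA : ∀ w, ∀ a ∈ A w, ∀ a' ∈ A w, ∀ a0 ∈ A w, ∀ b0 ∈ B w,
      dist a a' ≤ δ * dist a0 b0)
    (hsepB : ∀ w, ∀ b ∈ B w, ∀ b' ∈ B w, ∀ a0 ∈ A w, ∀ b0 ∈ B w,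
      dist b b' ≤ δ * dist a0 b0)
    (hcover : ∀ p ∈ P, ∀ q ∈ P, p ≠ q →
      ∃ w, (p ∈ A w ∧ q ∈ B w) ∨ (p ∈ B w ∧ q ∈ A w))
    {α : ℝ} (hα : 0 ≤ α)
    (rt : EuclideanSpace ℝ (Fin d) → ℝ)
    (hrt : ∀ p, rt p = sSup ({0} ∪ {r : ℝ | r ≤ α ∧ ∃ w,
      (p ∈ A w ∨ p ∈ B w) ∧
      dist (repA w) (repB w) / 4 ≤ r ∧ r ≤ 4 * dist (repA w) (repB w)})) :
    ∀ σ : Finset (EuclideanSpace ℝ (Fin d)), σ ⊆ P →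
      ((∃ x, ∀ p ∈ σ, dist x p ≤ rt p) ↔ ∃ x, ∀ p ∈ σ, dist x p ≤ α) := by
  have hrt_le (p) : rt p ≤ α := hrt p ▸ sSup_zero_union_setOf_le_and_le _ hα
  have le_rt (p w) (hw : p ∈ A w ∨ p ∈ B w) :
      ∀ r ∈ Icc (dist (repA w) (repB w) / 4) (4 * dist (repA w) (repB w)), r ≤ α → r ≤ rt p :=
    fun r hr hrα => hrt p ▸ le_sSup_zero_union_setOf_le_and hα hrα ⟨w, hw, hr⟩
  intro σ hσ
  refine ⟨fun ⟨x, hx⟩ => ⟨x, fun p hp => (hx p hp).trans (hrt_le p)⟩, fun ⟨x, hx⟩ => ?_⟩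
  refine exists_forall_dist_le_of_forall_dist_le (σ := (σ : Set _))
    (fun p _ => hrt p ▸ sSup_zero_union_setOf_le_and_nonneg _ hα) ?_ hx
  intro p hp q hq hne hpq
  obtain ⟨w, hw⟩ := hcover p (hσ hp) q (hσ hq) hne
  have hnear := abs_dist_sub_dist_le_of_mem_pair (A := (A w : Set _)) (B := (B w : Set _))
    (fun a ha => hsepA w a ha _ (hrA w) _ (hrA w) _ (hrB w))
    (fun b hb => hsepB w b hb _ (hrB w) _ (hrA w) _ (hrB w)) hw
  exact le_or_dist_le_of_abs_dist_sub_le hδ dist_nonneg hnear hpq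
    (le_rt p w (hw.imp And.left And.left)) (le_rt q w (hw.symm.imp And.right And.right))

/-- Lazy radii from a δ-WSPD reproduce the Čech complex: with
r̃_p(α) = max{ r ≤ α : r ∈ R̃_p } (and 0 if no such r), where R̃_p is the union
of the intervals [d(A,B)/4, 4d(A,B)] over WSPD pairs containing p, the nerve of
the balls B(p, r̃_p(α)) equals the nerve of the α-balls, i.e. the Čech complex
C_α. -/
theorem lazy_nerve_eq_cech {d : ℕ} {δ : ℝ} (hδ0 : 0 < δ) (hδ : δ ≤ 1 / 10)
    (P : Finset (EuclideanSpace ℝ (Fin d))) {ι : Type*} [Fintype ι]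
    (A B : ι → Finset (EuclideanSpace ℝ (Fin d)))
    (repA repB : ι → EuclideanSpace ℝ (Fin d))
    (hAP : ∀ w, A w ⊆ P) (hBP : ∀ w, B w ⊆ P)
    (hrA : ∀ w, repA w ∈ A w) (hrB : ∀ w, repB w ∈ B w)
    (hsepA : ∀ w, ∀ a ∈ A w, ∀ a' ∈ A w, ∀ a0 ∈ A w, ∀ b0 ∈ B w,
      dist a a' ≤ δ * dist a0 b0)
    (hsepB : ∀ w, ∀ b ∈ B w, ∀ b' ∈ B w, ∀ a0 ∈ A w, ∀ b0 ∈ B w,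
      dist b b' ≤ δ * dist a0 b0)
    (hcover : ∀ p ∈ P, ∀ q ∈ P, p ≠ q →
      ∃ w, (p ∈ A w ∧ q ∈ B w) ∨ (p ∈ B w ∧ q ∈ A w))
    {α : ℝ} (hα : 0 ≤ α)
    (rt : EuclideanSpace ℝ (Fin d) → ℝ)
    (hrt : ∀ p, rt p = sSup ({0} ∪ {r : ℝ | r ≤ α ∧ ∃ w,
      (p ∈ A w ∨ p ∈ B w) ∧
      dist (repA w) (repB w) / 4 ≤ r ∧ r ≤ 4 * dist (repA w) (repB w)})) :
    ∀ σ : Finset (EuclideanSpace ℝ (Fin d)), σ ⊆ P →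
      ((∃ x, ∀ p ∈ σ, dist x p ≤ rt p) ↔ ∃ x, ∀ p ∈ σ, dist x p ≤ α) :=
  lazy_nerve_eq_cech_general hδ P A B repA repB hrA hrB hsepA hsepB hcover hα rt hrt
end

section
/- Fix c ≥ 1 and let W be a δ-WSPD of a finite set P with δ ≤ 1/10 and fixed representatives. Define r_p(α) via the union of intervals [d(A,B)/8, 8·d(A,B)] over pairs where p is a representative, and r̃_p(α) via the larger system additionally including intervals [d(A,B)/4, 4·d(A,B)] for all pairs containing p. Then for every α ≥ 0 and every p ∈ P with r̃_p(α) > r_p(α), there exists q ∈ P with ‖p − q‖ ≤ 8δ·r̃_p(α) and r_q((1+8δ)α) ≥ (1+8δ)·r̃_p(α). Consequently ∪_p \bar{B}(p, r̃_p(α)) ⊆ ∪_p \bar{B}(p, r_p((1+8δ)α)). -/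
/-!
If `r̃_p(α) > r_p(α)`, the maximum defining `r̃_p(α)` is attained in an interval
`[d(A,B)/4, 4 d(A,B)]` of a pair `(A,B)` with `p ∈ A` (say). The representative `q` of
`A` is within `diam A ≤ δ d(A,B) ≤ 4δ r̃_p(α)` of `p`, and since `1/2 ≤ 1 + 8δ ≤ 2` the
radius `(1 + 8δ) r̃_p(α)` lies in the representative interval `[d(A,B)/8, 8 d(A,B)]` of `q`,
below `(1 + 8δ) α`. The ball inclusion follows by the triangle inequality, or, when
`r̃_p(α) ≤ r_p(α)`, from the monotonicity of `r_p` in `α`.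
-/

open Set

/-- The paper's `r_p(α)` is `lazyRadius R_p α`. -/
noncomputable def lazyRadius (R : Set ℝ) (α : ℝ) : ℝ :=
  sSup ({0} ∪ {s | s ≤ α ∧ s ∈ R})

section LazyRadius

variable {R S : Set ℝ} {α β s : ℝ}

lemma bddAbove_lazyRadius_set (R : Set ℝ) (α : ℝ) :
    BddAbove ({0} ∪ {s | s ≤ α ∧ s ∈ R}) := by
  refine ⟨max 0 α, ?_⟩
  rintro s (rfl | ⟨hsα, -⟩)
  · exact le_max_left _ _
  · exact hsα.trans (le_max_right _ _)

lemma lazyRadius_nonneg : 0 ≤ lazyRadius R α :=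
  le_csSup (bddAbove_lazyRadius_set R α) (mem_union_left _ rfl)

lemma le_lazyRadius (hsα : s ≤ α) (hs : s ∈ R) : s ≤ lazyRadius R α :=
  le_csSup (bddAbove_lazyRadius_set R α) (mem_union_right _ ⟨hsα, hs⟩)

lemma lazyRadius_mono (h : α ≤ β) : lazyRadius R α ≤ lazyRadius R β := by
  refine csSup_le_csSup (bddAbove_lazyRadius_set R β) ⟨0, mem_union_left _ rfl⟩ ?_
  rintro s (hs | ⟨hsα, hs⟩)
  · exact mem_union_left _ hs
  · exact mem_union_right _ ⟨hsα.trans h, hs⟩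

lemma lazyRadius_mem (hR : IsClosed R) :
    lazyRadius R α ∈ ({0} ∪ {s | s ≤ α ∧ s ∈ R} : Set ℝ) :=
  (isClosed_singleton.union (isClosed_Iic.inter hR)).csSup_mem
    ⟨0, mem_union_left _ rfl⟩ (bddAbove_lazyRadius_set R α)

lemma lazyRadius_union_mem_of_lt (hRS : IsClosed (R ∪ S))
    (h : lazyRadius R α < lazyRadius (R ∪ S) α) :
    lazyRadius (R ∪ S) α ≤ α ∧ lazyRadius (R ∪ S) α ∈ S := by
  rcases lazyRadius_mem (α := α) hRS with h0 | ⟨hα, hR | hS⟩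
  · exact absurd h0 (lazyRadius_nonneg.trans_lt h).ne'
  · exact absurd (le_lazyRadius hα hR) h.not_ge
  · exact ⟨hα, hS⟩

end LazyRadius

lemma isClosed_setOf_exists_Icc {ι : Type*} [Finite ι] (c : ι → Prop) (lo hi : ι → ℝ) :
    IsClosed {s : ℝ | ∃ w, c w ∧ lo w ≤ s ∧ s ≤ hi w} := by
  convert (Set.toFinite {w | c w}).isClosed_biUnion fun w _ =>
    isClosed_Icc (a := lo w) (b := hi w)
  ext
  simp [and_left_comm]

lemma mul_mem_Icc_eighth_of_mem_Icc_quarter {c D s : ℝ} (hc : c ∈ Icc (1 / 2) 2)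
    (hs : s ∈ Icc (D / 4) (4 * D)) : c * s ∈ Icc (D / 8) (8 * D) := by
  obtain ⟨hc₁, hc₂⟩ := hc
  obtain ⟨hs₁, hs₂⟩ := hs
  constructor <;> nlinarith

section WSPD

variable {X ι : Type*} [PseudoMetricSpace X] (A B : ι → Set X) (repA repB : ι → X)

/-- `R_p` in the paper. -/
def repRadii (p : X) : Set ℝ :=
  {s | ∃ w, (p = repA w ∨ p = repB w) ∧
    dist (repA w) (repB w) / 8 ≤ s ∧ s ≤ 8 * dist (repA w) (repB w)}

/-- The paper's `R̃_p` is `repRadii p ∪ memberRadii p`. -/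
def memberRadii (p : X) : Set ℝ :=
  {s | ∃ w, (p ∈ A w ∨ p ∈ B w) ∧
    dist (repA w) (repB w) / 4 ≤ s ∧ s ≤ 4 * dist (repA w) (repB w)}

variable [Finite ι]

lemma isClosed_repRadii (p : X) : IsClosed (repRadii repA repB p) :=
  isClosed_setOf_exists_Icc _ _ _

lemma isClosed_memberRadii (p : X) : IsClosed (memberRadii A B repA repB p) :=
  isClosed_setOf_exists_Icc _ _ _

variable {A B repA repB} {P : Set X} {δ α : ℝ}

lemma exists_near_rep_of_lazyRadius_lt (hδ0 : 0 ≤ δ) (hδ : δ ≤ 1 / 8)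
    (hAP : ∀ w, A w ⊆ P) (hBP : ∀ w, B w ⊆ P)
    (hrA : ∀ w, repA w ∈ A w) (hrB : ∀ w, repB w ∈ B w)
    (hdiamA : ∀ w, ∀ a ∈ A w, dist a (repA w) ≤ δ * dist (repA w) (repB w))
    (hdiamB : ∀ w, ∀ b ∈ B w, dist b (repB w) ≤ δ * dist (repA w) (repB w)) {p : X}
    (h : lazyRadius (repRadii repA repB p) α <
      lazyRadius (repRadii repA repB p ∪ memberRadii A B repA repB p) α) :
    ∃ q ∈ P,
      dist p q ≤ 8 * δ * lazyRadius (repRadii repA repB p ∪ memberRadii A B repA repB p) α ∧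
      (1 + 8 * δ) * lazyRadius (repRadii repA repB p ∪ memberRadii A B repA repB p) α ≤
        lazyRadius (repRadii repA repB q) ((1 + 8 * δ) * α) := by
  set t := lazyRadius (repRadii repA repB p ∪ memberRadii A B repA repB p) α
  obtain ⟨htα, w, hpw, hlo, hhi⟩ :=
    lazyRadius_union_mem_of_lt
      ((isClosed_repRadii _ _ p).union (isClosed_memberRadii _ _ _ _ p)) h
  set D := dist (repA w) (repB w)
  have ht : t ∈ Icc (D / 4) (4 * D) := ⟨hlo, hhi⟩
  have hscaled := mul_mem_Icc_eighth_of_mem_Icc_quarter (c := 1 + 8 * δ)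
    ⟨by linarith, by linarith⟩ ht
  have hnear : ∀ q, dist p q ≤ δ * D → dist p q ≤ 8 * δ * t := fun q hq => by nlinarith
  have hbelow : (1 + 8 * δ) * t ≤ (1 + 8 * δ) * α := by gcongr
  rcases hpw with hpA | hpB
  · exact ⟨repA w, hAP w (hrA w), hnear _ (hdiamA w p hpA),
      le_lazyRadius hbelow ⟨w, Or.inl rfl, hscaled⟩⟩
  · exact ⟨repB w, hBP w (hrB w), hnear _ (hdiamB w p hpB),
      le_lazyRadius hbelow ⟨w, Or.inr rfl, hscaled⟩⟩

end WSPD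

theorem lazy_sandwich_general {d : ℕ} {δ : ℝ} (hδ0 : 0 < δ) (hδ : δ ≤ 1 / 10)
    (P : Finset (EuclideanSpace ℝ (Fin d))) {ι : Type*} [Fintype ι]
    (A B : ι → Finset (EuclideanSpace ℝ (Fin d)))
    (repA repB : ι → EuclideanSpace ℝ (Fin d))
    (hAP : ∀ w, A w ⊆ P) (hBP : ∀ w, B w ⊆ P)
    (hrA : ∀ w, repA w ∈ A w) (hrB : ∀ w, repB w ∈ B w)
    (hsepA : ∀ w, ∀ a ∈ A w, ∀ a' ∈ A w, ∀ a0 ∈ A w, ∀ b0 ∈ B w,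
      dist a a' ≤ δ * dist a0 b0)
    (hsepB : ∀ w, ∀ b ∈ B w, ∀ b' ∈ B w, ∀ a0 ∈ A w, ∀ b0 ∈ B w,
      dist b b' ≤ δ * dist a0 b0)
    (r rt : ℝ → EuclideanSpace ℝ (Fin d) → ℝ)
    (hr : ∀ β p, r β p = sSup ({0} ∪ {s : ℝ | s ≤ β ∧ ∃ w,
      (p = repA w ∨ p = repB w) ∧
      dist (repA w) (repB w) / 8 ≤ s ∧ s ≤ 8 * dist (repA w) (repB w)}))
    (hrt : ∀ β p, rt β p = sSup ({0} ∪ {s : ℝ | s ≤ β ∧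
      ((∃ w, (p = repA w ∨ p = repB w) ∧
        dist (repA w) (repB w) / 8 ≤ s ∧ s ≤ 8 * dist (repA w) (repB w)) ∨
       (∃ w, (p ∈ A w ∨ p ∈ B w) ∧
        dist (repA w) (repB w) / 4 ≤ s ∧ s ≤ 4 * dist (repA w) (repB w)))}))
    {α : ℝ} (hα : 0 ≤ α) :
    (∀ p ∈ P, r α p < rt α p →
      ∃ q ∈ P, dist p q ≤ 8 * δ * rt α p ∧
        (1 + 8 * δ) * rt α p ≤ r ((1 + 8 * δ) * α) q) ∧
    ∀ x : EuclideanSpace ℝ (Fin d), (∃ p ∈ P, dist x p ≤ rt α p) →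
      ∃ p ∈ P, dist x p ≤ r ((1 + 8 * δ) * α) p := by
  set R : EuclideanSpace ℝ (Fin d) → Set ℝ := repRadii repA repB
  set Rt : EuclideanSpace ℝ (Fin d) → Set ℝ := fun p =>
    R p ∪ memberRadii (fun w => (A w : Set _)) (fun w => B w) repA repB p
  obtain rfl : r = fun β p => lazyRadius (R p) β := funext₂ hr
  obtain rfl : rt = fun β p => lazyRadius (Rt p) β := funext₂ hrt
  have key : ∀ p ∈ P, lazyRadius (R p) α < lazyRadius (Rt p) α →
      ∃ q ∈ P, dist p q ≤ 8 * δ * lazyRadius (Rt p) α ∧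
        (1 + 8 * δ) * lazyRadius (Rt p) α ≤ lazyRadius (R q) ((1 + 8 * δ) * α) := fun p _ h =>
    exists_near_rep_of_lazyRadius_lt hδ0.le (by linarith)
      (fun w => Finset.coe_subset.2 (hAP w)) (fun w => Finset.coe_subset.2 (hBP w)) hrA hrB
      (fun w a ha => hsepA w a ha _ (hrA w) _ (hrA w) _ (hrB w))
      (fun w b hb => hsepB w b hb _ (hrB w) _ (hrA w) _ (hrB w)) h
  refine ⟨key, ?_⟩
  rintro x ⟨p, hp, hxp⟩
  by_cases hlt : lazyRadius (R p) α < lazyRadius (Rt p) α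
  · obtain ⟨q, hq, hpq, hrq⟩ := key p hp hlt
    refine ⟨q, hq, ?_⟩
    linarith [dist_triangle x p q]
  · have hαδ : α ≤ (1 + 8 * δ) * α := le_mul_of_one_le_left hα (by linarith)
    exact ⟨p, hp, hxp.trans ((not_lt.1 hlt).trans (lazyRadius_mono hαδ))⟩

/-- Sandwich lemma for lazy radii: with r_p(α) the lazy radius from the
representative intervals [d(A,B)/8, 8d(A,B)] (over pairs where p is a
representative) and r̃_p(α) from the enlarged system which additionally includes
[d(A,B)/4, 4d(A,B)] for every pair containing p, any p with r̃_p(α) > r_p(α)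
admits q ∈ P with ‖p−q‖ ≤ 8δ·r̃_p(α) and r_q((1+8δ)α) ≥ (1+8δ)·r̃_p(α);
consequently ∪_p B(p, r̃_p(α)) ⊆ ∪_p B(p, r_p((1+8δ)α)). -/
theorem lazy_sandwich {d : ℕ} {δ : ℝ} (hδ0 : 0 < δ) (hδ : δ ≤ 1 / 10)
    (P : Finset (EuclideanSpace ℝ (Fin d))) {ι : Type*} [Fintype ι]
    (A B : ι → Finset (EuclideanSpace ℝ (Fin d)))
    (repA repB : ι → EuclideanSpace ℝ (Fin d))
    (hAP : ∀ w, A w ⊆ P) (hBP : ∀ w, B w ⊆ P)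
    (hrA : ∀ w, repA w ∈ A w) (hrB : ∀ w, repB w ∈ B w)
    (hsepA : ∀ w, ∀ a ∈ A w, ∀ a' ∈ A w, ∀ a0 ∈ A w, ∀ b0 ∈ B w,
      dist a a' ≤ δ * dist a0 b0)
    (hsepB : ∀ w, ∀ b ∈ B w, ∀ b' ∈ B w, ∀ a0 ∈ A w, ∀ b0 ∈ B w,
      dist b b' ≤ δ * dist a0 b0)
    (hcover : ∀ p ∈ P, ∀ q ∈ P, p ≠ q →
      ∃ w, (p ∈ A w ∧ q ∈ B w) ∨ (p ∈ B w ∧ q ∈ A w))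
    (r rt : ℝ → EuclideanSpace ℝ (Fin d) → ℝ)
    (hr : ∀ β p, r β p = sSup ({0} ∪ {s : ℝ | s ≤ β ∧ ∃ w,
      (p = repA w ∨ p = repB w) ∧
      dist (repA w) (repB w) / 8 ≤ s ∧ s ≤ 8 * dist (repA w) (repB w)}))
    (hrt : ∀ β p, rt β p = sSup ({0} ∪ {s : ℝ | s ≤ β ∧
      ((∃ w, (p = repA w ∨ p = repB w) ∧
        dist (repA w) (repB w) / 8 ≤ s ∧ s ≤ 8 * dist (repA w) (repB w)) ∨
       (∃ w, (p ∈ A w ∨ p ∈ B w) ∧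
        dist (repA w) (repB w) / 4 ≤ s ∧ s ≤ 4 * dist (repA w) (repB w)))}))
    {α : ℝ} (hα : 0 ≤ α) :
    (∀ p ∈ P, r α p < rt α p →
      ∃ q ∈ P, dist p q ≤ 8 * δ * rt α p ∧
        (1 + 8 * δ) * rt α p ≤ r ((1 + 8 * δ) * α) q) ∧
    ∀ x : EuclideanSpace ℝ (Fin d), (∃ p ∈ P, dist x p ≤ rt α p) →
      ∃ p ∈ P, dist x p ≤ r ((1 + 8 * δ) * α) p :=
  lazy_sandwich_general hδ0 hδ P A B repA repB hAP hBP hrA hrB hsepA hsepB r rt hr hrt hα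
end
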